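/- Let R be a weakly 5-fold stable commutative ring. Then for all units r, s ∈ R^*, in K^M_2(R) one has {r, −r} = 0 and {r, s} = −{s, r}. -/

import Mathlib

/-- The relations defining the Milnor K-group of a commutative ring `S`:
multilinearity relations and Steinberg relations (a generator `r₁ ⊗ … ⊗ r_n` with some
pair of consecutive entries summing to `1`). -/
def milnorRelSet (S : Type*) [CommRing S] (n : ℕ) : Set (FreeAbelianGroup (Fin n → Sˣ)) :=
  {x | ∃ (f : Fin n → Sˣ) (i : Fin n) (u v : Sˣ),
      x = FreeAbelianGroup.of (Function.update f i (u * v))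
        - FreeAbelianGroup.of (Function.update f i u)
        - FreeAbelianGroup.of (Function.update f i v)} ∪
  {x | ∃ (f : Fin n → Sˣ) (i j : Fin n), (i : ℕ) + 1 = (j : ℕ) ∧
      ((f i : S) + (f j : S) = 1) ∧ x = FreeAbelianGroup.of f}

/-- The `n`-th Milnor K-group of a commutative ring `S`: the quotient of `(Sˣ)^{⊗ n}`
(presented as the free abelian group on `n`-tuples of units, modulo multilinearity)
by the Steinberg relations. -/
def MilnorK (S : Type*) [CommRing S] (n : ℕ) : Type _ :=
  FreeAbelianGroup (Fin n → Sˣ) ⧸ AddSubgroup.closure (milnorRelSet S n)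

instance (S : Type*) [CommRing S] (n : ℕ) : AddCommGroup (MilnorK S n) :=
  QuotientAddGroup.Quotient.addCommGroup _

/-- The Milnor symbol `{r₁, …, r_n}`. -/
def milnorSymbol {S : Type*} [CommRing S] {n : ℕ} (f : Fin n → Sˣ) : MilnorK S n :=
  QuotientAddGroup.mk (FreeAbelianGroup.of f)

/-- Functoriality of Milnor K-groups in ring homomorphisms. -/
def MilnorK.map {S T : Type*} [CommRing S] [CommRing T] (φ : S →+* T) (n : ℕ) :
    MilnorK S n →+ MilnorK T n := by
  refine QuotientAddGroup.lift _
    ((QuotientAddGroup.mk' (AddSubgroup.closure (milnorRelSet T n))).comp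
      (FreeAbelianGroup.map (fun f => (Units.map (φ : S →* T)) ∘ f))) ?_
  intro x hx
  revert x hx
  rw [← SetLike.le_def, AddSubgroup.closure_le]
  rintro x (⟨f, i, u, v, rfl⟩ | ⟨f, i, j, hij, hsum, rfl⟩) <;>
    simp only [SetLike.mem_coe, AddMonoidHom.mem_ker, map_sub]
  · show milnorSymbol (Units.map (φ : S →* T) ∘ Function.update f i (u * v))
      - milnorSymbol (Units.map (φ : S →* T) ∘ Function.update f i u)
      - milnorSymbol (Units.map (φ : S →* T) ∘ Function.update f i v) = (0 : MilnorK T n)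
    unfold milnorSymbol
    refine (QuotientAddGroup.eq_zero_iff (N := AddSubgroup.closure (milnorRelSet T n))
      (FreeAbelianGroup.of _ - FreeAbelianGroup.of _ - FreeAbelianGroup.of _)).mpr ?_
    refine AddSubgroup.subset_closure (Or.inl ⟨Units.map (φ : S →* T) ∘ f, i,
      Units.map (φ : S →* T) u, Units.map (φ : S →* T) v, ?_⟩)
    simp [Function.comp_update]
  · show milnorSymbol (Units.map (φ : S →* T) ∘ f) = (0 : MilnorK T n)
    unfold milnorSymbol
    erw [QuotientAddGroup.eq_zero_iff]
    refine AddSubgroup.subset_closure (Or.inr ⟨Units.map (φ : S →* T) ∘ f, i, j, hij, ?_, rfl⟩)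
    simp only [Function.comp_apply, Units.coe_map, MonoidHom.coe_coe]
    rw [← map_add, hsum, map_one]

/-- A commutative ring `R` is weakly `k`-fold stable if for any `k - 1` elements
there is a unit `r` such that adding `r` to each of them yields a unit. -/
def WeaklyStable (R : Type*) [CommRing R] (k : ℕ) : Prop :=
  ∀ r : Fin (k - 1) → R, ∃ u : Rˣ, ∀ i, IsUnit (r i + (u : R))

/-!
Bilinearity and the Steinberg relation give `{x, -x} = 0` whenever `1 - x` is a unit, since
`-x = (1 - x) / (1 - x⁻¹)`; expanding `{xy, -xy}` then gives `{x, y} = -{y, x}` whenever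
`1 - x`, `1 - y` and `1 - xy` are units. Stability supplies enough such units: for `a` with
`1 - a` a unit and any `b`, a unit `t` making `1 - t`, `1 - at`, `1 - bt`, `1 - abt` units yields
`{a, t} + {a, b} = {a, bt} = -{bt, a} = -{t, a} - {b, a}`, so `{a, b} = -{b, a}`. Finally every
unit factors as `r = a b` with `1 - a`, `1 - b` units, and `{r, -r} = {a, b} + {b, a} = 0`.
-/

theorem update_vec_two_zero {α : Type*} (x y z : α) : Function.update ![x, y] 0 z = ![z, y] := by
  funext i; fin_cases i <;> rfl

theorem update_vec_two_one {α : Type*} (x y z : α) : Function.update ![x, y] 1 z = ![x, z] := by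
  funext i; fin_cases i <;> rfl

section MilnorSymbol

variable {R : Type*} [CommRing R]

theorem milnorSymbol_eq_add_of_mem_milnorRelSet {n : ℕ} (f g h : Fin n → Rˣ)
    (hrel : FreeAbelianGroup.of f - FreeAbelianGroup.of g - FreeAbelianGroup.of h ∈
      milnorRelSet R n) :
    milnorSymbol f = milnorSymbol g + (milnorSymbol h : MilnorK R n) := by
  have hzero := (QuotientAddGroup.eq_zero_iff _).2 (AddSubgroup.subset_closure hrel)
  rwa [QuotientAddGroup.mk_sub, QuotientAddGroup.mk_sub, sub_sub, sub_eq_zero] at hzero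

theorem milnorSymbol_mul_left (u v y : Rˣ) :
    milnorSymbol ![u * v, y] = milnorSymbol ![u, y] + (milnorSymbol ![v, y] : MilnorK R 2) :=
  milnorSymbol_eq_add_of_mem_milnorRelSet _ _ _ <|
    Or.inl ⟨![u, y], 0, u, v, by simp only [update_vec_two_zero]⟩

theorem milnorSymbol_mul_right (x u v : Rˣ) :
    milnorSymbol ![x, u * v] = milnorSymbol ![x, u] + (milnorSymbol ![x, v] : MilnorK R 2) :=
  milnorSymbol_eq_add_of_mem_milnorRelSet _ _ _ <|
    Or.inl ⟨![x, u], 1, u, v, by simp only [update_vec_two_one]⟩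

theorem milnorSymbol_eq_zero_of_add_eq_one {x y : Rˣ} (h : (x : R) + y = 1) :
    milnorSymbol ![x, y] = (0 : MilnorK R 2) :=
  (QuotientAddGroup.eq_zero_iff _).2 <|
    AddSubgroup.subset_closure (Or.inr ⟨![x, y], 0, 1, rfl, by simpa using h, rfl⟩)

theorem milnorSymbol_inv_left (x y : Rˣ) :
    milnorSymbol ![x⁻¹, y] = -(milnorSymbol ![x, y] : MilnorK R 2) := by
  have hone : milnorSymbol ![1, y] = (0 : MilnorK R 2) := by
    simpa using milnorSymbol_mul_left (1 : Rˣ) 1 y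
  rw [eq_neg_iff_add_eq_zero, add_comm, ← milnorSymbol_mul_left, mul_inv_cancel, hone]

theorem milnorSymbol_inv_right (x y : Rˣ) :
    milnorSymbol ![x, y⁻¹] = -(milnorSymbol ![x, y] : MilnorK R 2) := by
  have hone : milnorSymbol ![x, 1] = (0 : MilnorK R 2) := by
    simpa using milnorSymbol_mul_right x (1 : Rˣ) 1
  rw [eq_neg_iff_add_eq_zero, add_comm, ← milnorSymbol_mul_right, mul_inv_cancel, hone]

theorem milnorSymbol_neg_self_of_isUnit_one_sub {x : Rˣ} (hx : IsUnit (1 - (x : R))) :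
    milnorSymbol ![x, -x] = (0 : MilnorK R 2) := by
  obtain ⟨w, hw⟩ := hx
  set w' : Rˣ := -(x⁻¹ * w)
  have hw' : (w' : R) = 1 - ↑x⁻¹ := by
    simp only [w', Units.val_neg, Units.val_mul, hw]
    linear_combination x.inv_mul
  have hneg : -x = w * w'⁻¹ := by
    rw [eq_mul_inv_iff_mul_eq, neg_mul_neg, ← mul_assoc, mul_inv_cancel, one_mul]
  have hw_zero : milnorSymbol ![x, w] = (0 : MilnorK R 2) :=
    milnorSymbol_eq_zero_of_add_eq_one (by rw [hw]; ring)
  have hw'_zero : milnorSymbol ![x⁻¹, w'] = (0 : MilnorK R 2) :=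
    milnorSymbol_eq_zero_of_add_eq_one (by rw [hw']; ring)
  rw [milnorSymbol_inv_left, neg_eq_zero] at hw'_zero
  rw [hneg, milnorSymbol_mul_right, hw_zero, milnorSymbol_inv_right, hw'_zero, neg_zero, add_zero]

theorem milnorSymbol_add_swap (x y : Rˣ) :
    milnorSymbol ![x, y] + (milnorSymbol ![y, x] : MilnorK R 2)
      = milnorSymbol ![x * y, -(x * y)] - milnorSymbol ![x, -x] - milnorSymbol ![y, -y] := by
  rw [milnorSymbol_mul_left, ← neg_mul, milnorSymbol_mul_right, neg_mul, ← mul_neg,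
    milnorSymbol_mul_right]
  abel

theorem milnorSymbol_swap_of_isUnit_one_sub {x y : Rˣ} (hx : IsUnit (1 - (x : R)))
    (hy : IsUnit (1 - (y : R))) (hxy : IsUnit (1 - ((x * y : Rˣ) : R))) :
    milnorSymbol ![x, y] = -(milnorSymbol ![y, x] : MilnorK R 2) := by
  have h := milnorSymbol_add_swap x y
  rw [milnorSymbol_neg_self_of_isUnit_one_sub hx, milnorSymbol_neg_self_of_isUnit_one_sub hy,
    milnorSymbol_neg_self_of_isUnit_one_sub hxy, sub_zero, sub_zero] at h
  exact eq_neg_of_add_eq_zero_left h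

end MilnorSymbol

theorem isUnit_one_sub_mul_iff {R : Type*} [CommRing R] (x : Rˣ) (y : R) :
    IsUnit (1 - x * y) ↔ IsUnit (y - ↑x⁻¹) := by
  have h : 1 - x * y = ((-x : Rˣ) : R) * (y - ↑x⁻¹) := by
    simp only [Units.val_neg]
    linear_combination -x.mul_inv
  rw [h, Units.isUnit_units_mul]

namespace WeaklyStable

variable {R : Type*} [CommRing R]

theorem exists_isUnit_sub {n : ℕ} (hst : WeaklyStable R (n + 1)) (x : Fin n → R) :
    ∃ t : Rˣ, ∀ i, IsUnit ((t : R) - x i) := by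
  obtain ⟨t, ht⟩ := hst (-x)
  exact ⟨t, fun i => by simpa [neg_add_eq_sub] using ht i⟩

theorem milnorSymbol_swap_of_isUnit_one_sub (hst : WeaklyStable R 5) {a : Rˣ}
    (ha : IsUnit (1 - (a : R))) (b : Rˣ) :
    milnorSymbol ![a, b] = -(milnorSymbol ![b, a] : MilnorK R 2) := by
  obtain ⟨t, ht⟩ := hst.exists_isUnit_sub ![1, ↑a⁻¹, ↑b⁻¹, ↑(a * b)⁻¹]
  have ht1 : IsUnit (1 - (t : R)) := by simpa using (ht 0).neg
  have hat : IsUnit (1 - ((a * t : Rˣ) : R)) := by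
    simpa using (isUnit_one_sub_mul_iff a (t : R)).2 (by simpa using ht 1)
  have hbt : IsUnit (1 - ((b * t : Rˣ) : R)) := by
    simpa using (isUnit_one_sub_mul_iff b (t : R)).2 (by simpa using ht 2)
  have habt : IsUnit (1 - ((a * (b * t) : Rˣ) : R)) := by
    simpa [mul_assoc] using (isUnit_one_sub_mul_iff (a * b) (t : R)).2 (by simpa using ht 3)
  have h := _root_.milnorSymbol_swap_of_isUnit_one_sub ha hbt habt
  rw [milnorSymbol_mul_right, milnorSymbol_mul_left,
    _root_.milnorSymbol_swap_of_isUnit_one_sub ha ht1 hat, neg_add] at h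
  exact add_right_cancel h

theorem milnorSymbol_neg_self (hst : WeaklyStable R 5) (r : Rˣ) :
    milnorSymbol ![r, -r] = (0 : MilnorK R 2) := by
  obtain ⟨a, ha⟩ := hst.exists_isUnit_sub ![1, (r : R), 0, 0]
  have ha1 : IsUnit (1 - (a : R)) := by simpa using (ha 0).neg
  have hb1 : IsUnit (1 - ((a⁻¹ * r : Rˣ) : R)) := by
    simpa using ((isUnit_one_sub_mul_iff a⁻¹ r).2 (by simpa using (ha 1).neg))
  have h := milnorSymbol_add_swap a (a⁻¹ * r)
  rw [mul_inv_cancel_left, milnorSymbol_neg_self_of_isUnit_one_sub ha1,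
    milnorSymbol_neg_self_of_isUnit_one_sub hb1, sub_zero, sub_zero,
    hst.milnorSymbol_swap_of_isUnit_one_sub ha1, neg_add_cancel] at h
  exact h.symm

end WeaklyStable

/-- in a weakly 5-fold stable ring `R`, for all units `r, s`,
`{r, −r} = 0` and `{r, s} = −{s, r}` in `K^M_2(R)`. -/
theorem stmt_15 (R : Type*) [CommRing R] (hst : WeaklyStable R 5) (r s : Rˣ) :
    milnorSymbol ![r, -r] = (0 : MilnorK R 2) ∧
    milnorSymbol ![r, s] = -(milnorSymbol ![s, r] : MilnorK R 2) := by
  refine ⟨hst.milnorSymbol_neg_self r, eq_neg_of_add_eq_zero_left ?_⟩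
  rw [milnorSymbol_add_swap, hst.milnorSymbol_neg_self, hst.milnorSymbol_neg_self,
    hst.milnorSymbol_neg_self, sub_zero, sub_zero]
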